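/- Let r₀ = r ∈ (0,1) and r_{n} = 2√(r_{n−1})/(1 + r_{n−1}) for n ≥ 1. Then the infinite product P(r) = ∏_{n=0}^{∞} (1 + r_n)^{2^{−n}} converges to a finite positive real number. -/
import Mathlib

noncomputable def landen (r : ℝ) : ℕ → ℝ
  | 0 => r
  | n + 1 => 2 * Real.sqrt (landen r n) / (1 + landen r n)

lemma landen_mem_Ioo {r : ℝ} (hr : r ∈ Set.Ioo (0 : ℝ) 1) (n : ℕ) :
    landen r n ∈ Set.Ioo (0 : ℝ) 1 := by
  induction n with
  | zero => exact hr
  | succ n ih =>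
    obtain ⟨h0, h1⟩ := ih
    have hs : 0 < Real.sqrt (landen r n) := Real.sqrt_pos.mpr h0
    have hd : 0 < 1 + landen r n := by linarith
    constructor
    · show 0 < 2 * Real.sqrt (landen r n) / (1 + landen r n)
      exact div_pos (by linarith) hd
    · show 2 * Real.sqrt (landen r n) / (1 + landen r n) < 1
      rw [div_lt_one hd]
      have hsq : Real.sqrt (landen r n) ^ 2 = landen r n := Real.sq_sqrt h0.le
      have hne : Real.sqrt (landen r n) ≠ 1 := by
        intro h
        rw [h] at hsq; simp at hsq; linarith
      nlinarith [sq_nonneg (1 - Real.sqrt (landen r n))]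

theorem landenProd_convergent {r : ℝ} (hr : r ∈ Set.Ioo (0 : ℝ) 1) :
    Multipliable (fun n : ℕ => (1 + landen r n) ^ ((1 / 2 : ℝ) ^ n)) ∧
    0 < ∏' n : ℕ, (1 + landen r n) ^ ((1 / 2 : ℝ) ^ n) := by
  set f : ℕ → ℝ := fun n => Real.log (1 + landen r n) * (1 / 2 : ℝ) ^ n with hf
  have hgeom : Summable (fun n : ℕ => Real.log 2 * (1 / 2 : ℝ) ^ n) :=
    Summable.mul_left _ (summable_geometric_of_lt_one (by norm_num) (by norm_num))
  have hnn : ∀ n, 0 ≤ f n := fun n => by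
    have h0 := (landen_mem_Ioo hr n).1
    have hl : (0:ℝ) ≤ Real.log (1 + landen r n) := Real.log_nonneg (by linarith)
    have hp : (0:ℝ) ≤ (1/2:ℝ)^n := by positivity
    exact mul_nonneg hl hp
  have hsum : Summable f := by
    refine Summable.of_nonneg_of_le hnn (fun n => ?_) hgeom
    have h0 := (landen_mem_Ioo hr n).1
    have h1 := (landen_mem_Ioo hr n).2
    have hl : Real.log (1 + landen r n) ≤ Real.log 2 :=
      Real.log_le_log (by linarith) (by linarith)
    exact mul_le_mul_of_nonneg_right hl (by positivity)
  have hprod : HasProd (Real.exp ∘ f) (Real.exp (∑' n, f n)) := hsum.hasSum.rexp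
  have heq : (Real.exp ∘ f) = fun n : ℕ => (1 + landen r n) ^ ((1 / 2 : ℝ) ^ n) := by
    funext n
    have h0 := (landen_mem_Ioo hr n).1
    simp only [Function.comp, hf]
    rw [Real.rpow_def_of_pos (by linarith)]
  rw [heq] at hprod
  exact ⟨hprod.multipliable, hprod.tprod_eq ▸ Real.exp_pos _⟩
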